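/- arXiv:1302.1737 — 2 statements merged into one kernel-verified Lean document; each statement's English description precedes it below -/
import Mathlib

section
/- The language interpretation of the matricial evaluation of a DFA equals the language recognised by that DFA: R(u·M*·v) is exactly the set of words accepted by the automaton (u,M,v). -/
/-
Write `T = S M` for the transition matrix `M`. The unfolding axiom `1 + M T ≤ T` gives, by
induction on `w`, that `w` lies in the language of `T i (δ i w)`, where
`δ i w = w.foldl step i`; so every accepted word lies in `R (u T v)`. Conversely, Kleene's
state-elimination construction yields a matrix `x` of regular expressions with `1 ≤ x` and
`M x ≤ x` provably in KA, and the left induction axiom forces `T ≤ x`. Since `R` is a morphism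
of Kleene algebras, `R x` is the same construction on `R M`, which lies below every reflexive
and transitive matrix of languages containing `R M`, in particular below the reachability
matrix `{w | δ i w = j}`.
-/

structure IsKleeneAlgebra {X : Type*} (add mul : X → X → X) (star : X → X)
    (one zero : X) : Prop where
  add_assoc : ∀ x y z, add (add x y) z = add x (add y z)
  add_comm : ∀ x y, add x y = add y x
  add_idem : ∀ x, add x x = x
  add_zero : ∀ x, add x zero = x
  mul_assoc : ∀ x y z, mul (mul x y) z = mul x (mul y z)
  one_mul : ∀ x, mul one x = x
  mul_one : ∀ x, mul x one = x
  zero_mul : ∀ x, mul zero x = zero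
  mul_zero : ∀ x, mul x zero = zero
  left_distrib : ∀ x y z, mul x (add y z) = add (mul x y) (mul x z)
  right_distrib : ∀ x y z, mul (add x y) z = add (mul x z) (mul y z)
  star_unfold : ∀ x, add (add one (mul x (star x))) (star x) = star x
  star_ind_left : ∀ x y, add (mul y x) x = x → add (mul (star y) x) x = x
  star_ind_right : ∀ x y, add (mul x y) x = x → add (mul x (star y)) x = x

inductive Regex (A : Type) : Type
  | zero : Regex A
  | one : Regex A
  | letter : A → Regex A
  | plus : Regex A → Regex A → Regex A
  | mul : Regex A → Regex A → Regex A
  | star : Regex A → Regex A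

def Regex.eval {A : Type} {X : Type*} [KleeneAlgebra X] (σ : A → X) :
    Regex A → X
  | .zero => 0
  | .one => 1
  | .letter p => σ p
  | .plus x y => x.eval σ + y.eval σ
  | .mul x y => x.eval σ * y.eval σ
  | .star x => KStar.kstar (x.eval σ)

/-- KA-provable equality: `x = y` holds in every Kleene algebra under
every interpretation. -/
def KAEquiv {A : Type} (x y : Regex A) : Prop :=
  ∀ (X : Type) [KleeneAlgebra X] (σ : A → X), x.eval σ = y.eval σ

instance regexSetoid (A : Type) : Setoid (Regex A) :=
  ⟨KAEquiv, fun _ _ _ _ => rfl,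
   fun h X _ σ => (h X σ).symm,
   fun h1 h2 X _ σ => (h1 X σ).trans (h2 X σ)⟩

/-- Regular expressions modulo KA-provable equality. -/
def RegexQ (A : Type) := Quotient (regexSetoid A)

def RegexQ.zero {A : Type} : RegexQ A := ⟦Regex.zero⟧
def RegexQ.one {A : Type} : RegexQ A := ⟦Regex.one⟧

def RegexQ.add {A : Type} : RegexQ A → RegexQ A → RegexQ A :=
  Quotient.map₂ Regex.plus (fun _ _ h1 _ _ h2 X _ σ => by
    simp [Regex.eval, h1 X σ, h2 X σ])

def RegexQ.mul {A : Type} : RegexQ A → RegexQ A → RegexQ A :=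
  Quotient.map₂ Regex.mul (fun _ _ h1 _ _ h2 X _ σ => by
    simp [Regex.eval, h1 X σ, h2 X σ])

def RegexQ.sum {A : Type} (l : List (RegexQ A)) : RegexQ A :=
  l.foldr RegexQ.add RegexQ.zero

/-- Matrix addition over `RegexQ`. -/
def mAdd {A : Type} {ι κ : Type} (M N : Matrix ι κ (RegexQ A)) :
    Matrix ι κ (RegexQ A) :=
  Matrix.of fun i j => (M i j).add (N i j)

/-- Matrix multiplication over `RegexQ`. -/
noncomputable def mMul {A : Type} {ι κ l : Type} [Fintype κ] (M : Matrix ι κ (RegexQ A))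
    (N : Matrix κ l (RegexQ A)) : Matrix ι l (RegexQ A) :=
  Matrix.of fun i j => RegexQ.sum ((Finset.univ.toList (α := κ)).map fun k => (M i k).mul (N k j))

def mId {A : Type} (ι : Type) [DecidableEq ι] : Matrix ι ι (RegexQ A) :=
  Matrix.of fun i j => if i = j then RegexQ.one else RegexQ.zero

def mZero {A : Type} (ι κ : Type) : Matrix ι κ (RegexQ A) :=
  Matrix.of fun _ _ => RegexQ.zero

/-- The 0-1 initial row vector of a DFA. -/
def dfaU {A : Type} {n : ℕ} (start : Fin n) : Matrix (Fin 1) (Fin n) (RegexQ A) :=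
  Matrix.of fun _ j => if j = start then RegexQ.one else RegexQ.zero

/-- The transition matrix of a DFA: entry (i,j) is the sum of the letters
leading from state i to state j, so that each row contains exactly one
occurrence of each letter. -/
noncomputable def dfaM {A : Type} [Fintype A] {n : ℕ} (step : Fin n → A → Fin n) :
    Matrix (Fin n) (Fin n) (RegexQ A) :=
  Matrix.of fun i j =>
    RegexQ.sum (((Finset.univ.filter fun p => step i p = j).toList).map
      fun p => ⟦Regex.letter p⟧)

/-- The 0-1 accepting column vector of a DFA. -/
def dfaV {A : Type} {n : ℕ} (accept : Fin n → Bool) :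
    Matrix (Fin n) (Fin 1) (RegexQ A) :=
  Matrix.of fun i _ => if accept i then RegexQ.one else RegexQ.zero

/-- The word accepted relation of a DFA. -/
def dfaAccepts {A : Type} {n : ℕ} (step : Fin n → A → Fin n) (start : Fin n)
    (accept : Fin n → Bool) (w : List A) : Prop :=
  accept (w.foldl step start) = true

/-- Language interpretation of a regular expression modulo KA equality. -/
def RegexQ.lang {A : Type} : RegexQ A → Language A :=
  Quotient.lift (fun x => Regex.eval (fun p => ({[p]} : Language A)) x)
    (fun _ _ h => h (Language A) _)


open Matrix Computability

lemma Language.mem_sum {α ι : Type*} {s : Finset ι} {f : ι → Language α} {w : List α} :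
    w ∈ ∑ i ∈ s, f i ↔ ∃ i ∈ s, w ∈ f i := by
  classical
  induction s using Finset.induction with
  | empty => simp [Language.notMem_zero]
  | insert _ _ hi ih =>
    simp only [Finset.sum_insert hi, Language.mem_add, ih, Finset.mem_insert, exists_eq_or_imp]

section KleeneMatrix
variable {X : Type*} [KleeneAlgebra X]

lemma Finset.sum_le_iff_of_idem {ι : Type*} {s : Finset ι} {f : ι → X} {a : X} :
    ∑ i ∈ s, f i ≤ a ↔ ∀ i ∈ s, f i ≤ a := by
  classical
  induction s using Finset.induction with
  | empty => simp
  | insert _ _ hi ih => simp [Finset.sum_insert hi, ih]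

variable {n : ℕ}

/-- Conway's formula for the star of the block matrix `[[a, b], [c, D]]`, given `D' = D∗`. -/
def Matrix.blockStar (a : X) (b c : Fin n → X) (D' : Matrix (Fin n) (Fin n) X) :
    Matrix (Fin (n + 1)) (Fin (n + 1)) X :=
  let f := (a + b ⬝ᵥ (D' *ᵥ c))∗
  of <| Fin.cases (Fin.cases f fun j => f * (b ᵥ* D') j) fun i =>
    Fin.cases ((D' *ᵥ c) i * f) fun j => D' i j + (D' *ᵥ c) i * f * (b ᵥ* D') j

namespace Matrix

section blockStar
variable (a : X) (b c : Fin n → X) (D' : Matrix (Fin n) (Fin n) X) (i j : Fin n)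

@[simp] lemma blockStar_zero_zero : blockStar a b c D' 0 0 = (a + b ⬝ᵥ (D' *ᵥ c))∗ := rfl

@[simp] lemma blockStar_zero_succ :
    blockStar a b c D' 0 j.succ = (a + b ⬝ᵥ (D' *ᵥ c))∗ * (b ᵥ* D') j := rfl

@[simp] lemma blockStar_succ_zero :
    blockStar a b c D' i.succ 0 = (D' *ᵥ c) i * (a + b ⬝ᵥ (D' *ᵥ c))∗ := rfl

@[simp] lemma blockStar_succ_succ :
    blockStar a b c D' i.succ j.succ =
      D' i j + (D' *ᵥ c) i * (a + b ⬝ᵥ (D' *ᵥ c))∗ * (b ᵥ* D') j := rfl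

end blockStar

lemma le_mulVec_of_one_le_diag {D : Matrix (Fin n) (Fin n) X} (hD : ∀ i, 1 ≤ D i i)
    (v : Fin n → X) (i : Fin n) : v i ≤ (D *ᵥ v) i :=
  calc v i ≤ D i i * v i := le_mul_of_one_le_left' (hD i)
    _ ≤ (D *ᵥ v) i := Finset.single_le_sum (f := fun l => D i l * v l) (fun _ _ => zero_le)
      (Finset.mem_univ i)

lemma mul_blockStar_le (M : Matrix (Fin (n + 1)) (Fin (n + 1)) X) {D' : Matrix (Fin n) (Fin n) X}
    (hD'₁ : ∀ i, 1 ≤ D' i i)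
    (hD' : ∀ i j, (M.submatrix Fin.succ Fin.succ * D') i j ≤ D' i j)
    (i j : Fin (n + 1)) :
    (M * blockStar (M 0 0) (fun k => M 0 k.succ) (fun l => M l.succ 0) D') i j ≤
      blockStar (M 0 0) (fun k => M 0 k.succ) (fun l => M l.succ 0) D' i j := by
  set b : Fin n → X := fun k => M 0 k.succ
  set c : Fin n → X := fun l => M l.succ 0
  set w := D' *ᵥ c
  set r := b ᵥ* D'
  set g := M 0 0 + b ⬝ᵥ w
  have hg : ∀ {y}, y ≤ g → y * g∗ ≤ g∗ := fun h =>
    (mul_le_mul_left h _).trans mul_kstar_le_kstar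
  have ha : M 0 0 ≤ g := le_self_add
  have hb : ∀ k, b k * w k ≤ g := fun k =>
    (Finset.single_le_sum (f := fun k => b k * w k) (fun _ _ => zero_le) (Finset.mem_univ k)).trans
      le_add_self
  have hr : ∀ k j, b k * D' k j ≤ r j := fun k j =>
    Finset.single_le_sum (f := fun k => b k * D' k j) (fun _ _ => zero_le) (Finset.mem_univ k)
  have hc : ∀ i, c i ≤ w i := le_mulVec_of_one_le_diag hD'₁ c
  have hDD' : ∀ i k j, M i.succ k.succ * D' k j ≤ D' i j := fun i k j =>
    (Finset.single_le_sum (f := fun k => M i.succ k.succ * D' k j) (fun _ _ => zero_le)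
      (Finset.mem_univ k)).trans (hD' i j)
  have hw : ∀ i k, M i.succ k.succ * w k ≤ w i := fun i k => by
    simp only [w, mulVec, dotProduct, Finset.mul_sum, ← mul_assoc]
    exact Finset.sum_le_sum fun l _ => mul_le_mul_left (hDD' i k l) _
  rw [mul_apply, Fin.sum_univ_succ]
  refine add_le ?_ (Finset.sum_le_iff_of_idem.2 fun k _ => ?_) <;>
    cases i using Fin.cases <;> cases j using Fin.cases <;>
    simp only [blockStar_zero_zero, blockStar_zero_succ, blockStar_succ_zero, blockStar_succ_succ,
      mul_add, ← mul_assoc]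
  · exact hg ha
  · exact mul_le_mul_left (hg ha) _
  · exact mul_le_mul_left (hc _) _
  · exact (mul_le_mul_left (mul_le_mul_left (hc _) _) _).trans le_add_self
  · exact hg (hb k)
  · exact add_le ((hr k _).trans (le_mul_of_one_le_left' one_le_kstar))
      (mul_le_mul_left (hg (hb k)) _)
  · exact mul_le_mul_left (hw _ k) _
  · exact add_le_add (hDD' _ k _) (mul_le_mul_left (mul_le_mul_left (hw _ k) _) _)

lemma one_le_blockStar (a : X) (b c : Fin n → X) {D' : Matrix (Fin n) (Fin n) X}
    (hD'₁ : ∀ i, 1 ≤ D' i i) (i : Fin (n + 1)) : 1 ≤ blockStar a b c D' i i := by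
  cases i using Fin.cases
  · exact one_le_kstar
  · exact (hD'₁ _).trans le_self_add

lemma blockStar_le (M F : Matrix (Fin (n + 1)) (Fin (n + 1)) X) {D' : Matrix (Fin n) (Fin n) X}
    (hF₁ : ∀ i, 1 ≤ F i i) (hF : ∀ i j k, F i j * F j k ≤ F i k)
    (hMF : ∀ i j, M i j ≤ F i j) (hD'F : ∀ i j, D' i j ≤ F i.succ j.succ)
    (i j : Fin (n + 1)) :
    blockStar (M 0 0) (fun k => M 0 k.succ) (fun l => M l.succ 0) D' i j ≤ F i j := by
  have trans : ∀ {x y i j k}, x ≤ F i j → y ≤ F j k → x * y ≤ F i k := fun hx hy =>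
    (mul_le_mul' hx hy).trans (hF _ _ _)
  have hw : ∀ i, (D' *ᵥ fun l => M l.succ 0) i ≤ F i.succ 0 := fun i => by
    rw [mulVec, dotProduct]
    exact Finset.sum_le_iff_of_idem.2 fun l _ => trans (hD'F i l) (hMF _ _)
  have hr : ∀ j, ((fun k => M 0 k.succ) ᵥ* D') j ≤ F 0 j.succ := fun j => by
    rw [vecMul, dotProduct]
    exact Finset.sum_le_iff_of_idem.2 fun k _ => trans (hMF _ _) (hD'F k j)
  have hf : (M 0 0 + (fun k => M 0 k.succ) ⬝ᵥ (D' *ᵥ fun l => M l.succ 0))∗ ≤ F 0 0 :=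
    kstar_le_of_mul_le_left (hF₁ 0) <| trans le_rfl <| add_le (hMF 0 0) <|
      Finset.sum_le_iff_of_idem.2 fun k _ => trans (hMF _ _) (hw k)
  cases i using Fin.cases <;> cases j using Fin.cases
  · exact hf
  · exact trans hf (hr _)
  · exact trans (hw _) hf
  · exact add_le (hD'F _ _) (trans (trans (hw _) hf) (hr _))

lemma map_blockStar {Y : Type*} [KleeneAlgebra Y] (φ : X →+* Y)
    (hφ : ∀ x, φ x∗ = (φ x)∗)
    (a : X) (b c : Fin n → X) (D' : Matrix (Fin n) (Fin n) X) :
    (blockStar a b c D').map φ = blockStar (φ a) (φ ∘ b) (φ ∘ c) (D'.map φ) := by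
  ext i j
  cases i using Fin.cases <;> cases j using Fin.cases <;>
    simp only [map_apply, blockStar_zero_zero, blockStar_zero_succ, blockStar_succ_zero,
      blockStar_succ_succ, map_add, map_mul, hφ, RingHom.map_dotProduct, RingHom.map_mulVec,
      RingHom.map_vecMul, Function.comp_def]

def kleeneStar : {n : ℕ} → Matrix (Fin n) (Fin n) X → Matrix (Fin n) (Fin n) X
  | 0, M => M
  | _ + 1, M => blockStar (M 0 0) (fun k => M 0 k.succ) (fun l => M l.succ 0)
      (kleeneStar (M.submatrix Fin.succ Fin.succ))

lemma one_le_kleeneStar : ∀ {n : ℕ} (M : Matrix (Fin n) (Fin n) X) (i : Fin n),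
    1 ≤ M.kleeneStar i i
  | 0, _, i => i.elim0
  | _ + 1, _, i => one_le_blockStar _ _ _ (one_le_kleeneStar _) i

lemma mul_kleeneStar_le : ∀ {n : ℕ} (M : Matrix (Fin n) (Fin n) X) (i j : Fin n),
    (M * M.kleeneStar) i j ≤ M.kleeneStar i j
  | 0, _, i, _ => i.elim0
  | _ + 1, M, i, j =>
    mul_blockStar_le M (one_le_kleeneStar _) (mul_kleeneStar_le _) i j

lemma kleeneStar_le : ∀ {n : ℕ} (M F : Matrix (Fin n) (Fin n) X),
    (∀ i, 1 ≤ F i i) → (∀ i j k, F i j * F j k ≤ F i k) → (∀ i j, M i j ≤ F i j) →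
    ∀ i j, M.kleeneStar i j ≤ F i j
  | 0, _, _, _, _, _, i, _ => i.elim0
  | _ + 1, M, F, hF₁, hF, hMF, i, j =>
    blockStar_le M F hF₁ hF hMF
      (kleeneStar_le _ (F.submatrix Fin.succ Fin.succ) (fun i => hF₁ i.succ)
        (fun _ _ _ => hF _ _ _) (fun _ _ => hMF _ _)) i j

lemma map_kleeneStar {Y : Type*} [KleeneAlgebra Y] (φ : X →+* Y)
    (hφ : ∀ x, φ x∗ = (φ x)∗) :
    ∀ {n : ℕ} (M : Matrix (Fin n) (Fin n) X), M.kleeneStar.map φ = (M.map φ).kleeneStar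
  | 0, _ => rfl
  | _ + 1, M => by
    rw [kleeneStar, map_blockStar φ hφ, map_kleeneStar φ hφ]
    rfl

lemma le_kleeneStar_of_star_ind {M T : Matrix (Fin n) (Fin n) X}
    (hT : ∀ x, M * x + x = x → T * x + x = x) (i j : Fin n) : T i j ≤ M.kleeneStar i j := by
  set x := M.kleeneStar
  have hMx : M * x + x = x := by
    ext i j; exact add_eq_right_iff_le.2 (mul_kleeneStar_le M i j)
  have hx : 1 + x = x := by
    ext i j
    rw [add_apply, one_apply]
    split_ifs with h
    · exact add_eq_right_iff_le.2 (h ▸ one_le_kleeneStar M i)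
    · exact zero_add _
  have hTx : T + x = x :=
    calc T + x = T * (1 + x) + x := by rw [mul_add, mul_one, add_assoc, hT x hMx]
      _ = x := by rw [hx, hT x hMx]
  exact add_eq_right_iff_le.1 (congrFun₂ hTx i j)

end Matrix
end KleeneMatrix

namespace RegexQ
variable {A : Type}

def star : RegexQ A → RegexQ A :=
  Quotient.map Regex.star fun _ _ h X _ σ => by simp only [Regex.eval, h X σ]

instance : Zero (RegexQ A) := ⟨RegexQ.zero⟩
instance : One (RegexQ A) := ⟨RegexQ.one⟩
instance : Add (RegexQ A) := ⟨RegexQ.add⟩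
instance : Mul (RegexQ A) := ⟨RegexQ.mul⟩
instance : KStar (RegexQ A) := ⟨RegexQ.star⟩

def letter (p : A) : RegexQ A := ⟦.letter p⟧

def eval {X : Type} [KleeneAlgebra X] (σ : A → X) : RegexQ A → X :=
  Quotient.lift (Regex.eval σ) fun _ _ h => h X σ

section eval
variable {X : Type} [KleeneAlgebra X] (σ : A → X)

@[simp] lemma eval_zero : eval σ (0 : RegexQ A) = 0 := rfl

@[simp] lemma eval_one : eval σ (1 : RegexQ A) = 1 := rfl

@[simp] lemma eval_add (a b : RegexQ A) : eval σ (a + b) = eval σ a + eval σ b := by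
  induction a, b using Quotient.inductionOn₂; rfl

@[simp] lemma eval_mul (a b : RegexQ A) : eval σ (a * b) = eval σ a * eval σ b := by
  induction a, b using Quotient.inductionOn₂; rfl

@[simp] lemma eval_kstar (a : RegexQ A) : eval σ a∗ = (eval σ a)∗ := by
  induction a using Quotient.inductionOn; rfl

end eval

lemma eq_of_eval_eq {a b : RegexQ A}
    (h : ∀ (X : Type) [KleeneAlgebra X] (σ : A → X), eval σ a = eval σ b) : a = b := by
  induction a, b using Quotient.inductionOn₂
  exact Quotient.sound h

instance : LE (RegexQ A) :=
  ⟨fun a b => ∀ (X : Type) [KleeneAlgebra X] (σ : A → X), eval σ a ≤ eval σ b⟩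

instance : KleeneAlgebra (RegexQ A) where
  add := (· + ·)
  zero := 0
  mul := (· * ·)
  one := 1
  kstar := KStar.kstar
  sup := (· + ·)
  bot := 0
  nsmul := nsmulRec
  npow := npowRec
  add_assoc _ _ _ := eq_of_eval_eq fun _ _ _ => by simp only [eval_add, add_assoc]
  zero_add _ := eq_of_eval_eq fun _ _ _ => by simp
  add_zero _ := eq_of_eval_eq fun _ _ _ => by simp
  add_comm _ _ := eq_of_eval_eq fun _ _ _ => by simp only [eval_add, add_comm]
  mul_assoc _ _ _ := eq_of_eval_eq fun _ _ _ => by simp only [eval_mul, mul_assoc]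
  one_mul _ := eq_of_eval_eq fun _ _ _ => by simp
  mul_one _ := eq_of_eval_eq fun _ _ _ => by simp
  zero_mul _ := eq_of_eval_eq fun _ _ _ => by simp
  mul_zero _ := eq_of_eval_eq fun _ _ _ => by simp
  left_distrib _ _ _ := eq_of_eval_eq fun _ _ _ => by simp only [eval_add, eval_mul, mul_add]
  right_distrib _ _ _ := eq_of_eval_eq fun _ _ _ => by simp only [eval_add, eval_mul, add_mul]
  le_refl _ _ _ _ := le_rfl
  le_trans _ _ _ h₁ h₂ X _ σ := (h₁ X σ).trans (h₂ X σ)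
  le_antisymm _ _ h₁ h₂ := eq_of_eval_eq fun X _ σ => (h₁ X σ).antisymm (h₂ X σ)
  le_sup_left _ _ _ _ _ := by simp only [eval_add]; exact le_self_add
  le_sup_right _ _ _ _ _ := by simp only [eval_add]; exact le_add_self
  sup_le _ _ _ h₁ h₂ X _ σ := by simp only [eval_add]; exact add_le (h₁ X σ) (h₂ X σ)
  bot_le _ _ _ _ := by simp only [eval_zero]; exact zero_le
  one_le_kstar _ _ _ _ := by simp only [eval_one, eval_kstar]; exact one_le_kstar
  mul_kstar_le_kstar _ _ _ _ := by simp only [eval_mul, eval_kstar]; exact mul_kstar_le_kstar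
  kstar_mul_le_kstar _ _ _ _ := by simp only [eval_mul, eval_kstar]; exact kstar_mul_le_kstar
  mul_kstar_le_self _ _ h X _ σ := by
    simpa only [eval_mul, eval_kstar] using
      mul_kstar_le_self (by simpa only [eval_mul] using h X σ)
  kstar_mul_le_self _ _ h X _ σ := by
    simpa only [eval_mul, eval_kstar] using
      kstar_mul_le_self (by simpa only [eval_mul] using h X σ)

def evalHom {X : Type} [KleeneAlgebra X] (σ : A → X) : RegexQ A →+* X where
  toFun := eval σ
  map_zero' := rfl
  map_one' := rfl
  map_add' := eval_add σ
  map_mul' := eval_mul σ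

lemma lang_eq_evalHom (a : RegexQ A) : a.lang = evalHom (fun p => {[p]}) a := rfl

lemma sum_eq_list_sum (l : List (RegexQ A)) : RegexQ.sum l = l.sum := by
  induction l with
  | nil => rfl
  | cons a l ih => rw [List.sum_cons, ← ih]; rfl

@[simp] lemma lang_letter (p : A) : (letter p).lang = {[p]} := rfl

lemma lang_mul (a b : RegexQ A) : (a * b).lang = a.lang * b.lang := eval_mul _ a b

lemma lang_mono {a b : RegexQ A} (h : a ≤ b) : a.lang ≤ b.lang := h _ _

lemma mem_lang_sum {ι : Type*} {s : Finset ι} {f : ι → RegexQ A} {w : List A} :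
    w ∈ (∑ i ∈ s, f i).lang ↔ ∃ i ∈ s, w ∈ (f i).lang := by
  rw [lang_eq_evalHom, map_sum, Language.mem_sum]
  rfl

end RegexQ

section DFA
variable {A : Type}

lemma mMul_eq_mul {ι κ ν : Type} [Fintype κ] (M : Matrix ι κ (RegexQ A))
    (N : Matrix κ ν (RegexQ A)) : mMul M N = M * N := by
  ext i j
  rw [mMul, of_apply, RegexQ.sum_eq_list_sum, Finset.sum_map_toList, mul_apply]
  rfl

lemma mAdd_eq_add {ι κ : Type} (M N : Matrix ι κ (RegexQ A)) : mAdd M N = M + N := rfl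

lemma mId_eq_one {ι : Type} [DecidableEq ι] : mId ι = (1 : Matrix ι ι (RegexQ A)) := rfl

variable {n : ℕ}

lemma dfaU_mul_apply {ι : Type} (start : Fin n) (T : Matrix (Fin n) ι (RegexQ A)) (j : ι) :
    (dfaU (A := A) start * T) 0 j = T start j := by
  simp [mul_apply, dfaU, show RegexQ.one = (1 : RegexQ A) from rfl,
    show RegexQ.zero = (0 : RegexQ A) from rfl]

lemma mul_dfaV_apply {ι : Type} (accept : Fin n → Bool) (T : Matrix ι (Fin n) (RegexQ A))
    (i : ι) :
    (T * dfaV (A := A) accept) i 0 = ∑ j ∈ Finset.univ.filter (accept · = true), T i j := by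
  simp [mul_apply, dfaV, Finset.sum_filter, show RegexQ.one = (1 : RegexQ A) from rfl,
    show RegexQ.zero = (0 : RegexQ A) from rfl]

variable [Fintype A] (step : Fin n → A → Fin n)

lemma dfaM_apply (i j : Fin n) :
    dfaM step i j = ∑ p ∈ Finset.univ.filter (step i · = j), RegexQ.letter p :=
  (RegexQ.sum_eq_list_sum _).trans (Finset.sum_map_toList _ _)

lemma mem_lang_dfaM {i j : Fin n} {w : List A} :
    w ∈ (dfaM step i j).lang ↔ ∃ p, step i p = j ∧ w = [p] := by
  rw [dfaM_apply, RegexQ.mem_lang_sum]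
  simp only [Finset.mem_filter, Finset.mem_univ, true_and, RegexQ.lang_letter]
  rfl

lemma mem_lang_foldl {T : Matrix (Fin n) (Fin n) (RegexQ A)}
    (hT : 1 + dfaM step * T + T = T) (w : List A) (i : Fin n) :
    w ∈ (T i (w.foldl step i)).lang := by
  replace hT : ∀ i j, (1 : Matrix _ _ _) i j + (dfaM step * T) i j ≤ T i j := fun i j =>
    add_eq_right_iff_le.1 (by simpa only [Matrix.add_apply] using congrFun₂ hT i j)
  induction w generalizing i with
  | nil =>
    have h1 : (1 : RegexQ A) ≤ T i i := by simpa using le_of_add_le_left (hT i i)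
    exact RegexQ.lang_mono h1 Language.nil_mem_one
  | cons p w ih =>
    have hp : [p] ∈ (dfaM step i (step i p)).lang := (mem_lang_dfaM step).2 ⟨p, rfl, rfl⟩
    have hNT : dfaM step i (step i p) * T (step i p) (w.foldl step (step i p)) ≤
        T i ((p :: w).foldl step i) :=
      (Finset.single_le_sum (f := fun k => dfaM step i k * T k _) (fun _ _ => zero_le)
        (Finset.mem_univ _)).trans (le_of_add_le_right (hT _ _))
    refine RegexQ.lang_mono hNT ?_
    rw [RegexQ.lang_mul]
    exact Language.append_mem_mul hp (ih _)

lemma lang_kleeneStar_dfaM_le (i j : Fin n) :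
    ((dfaM step).kleeneStar i j).lang ≤ {w | w.foldl step i = j} := by
  rw [RegexQ.lang_eq_evalHom, ← map_apply (f := RegexQ.evalHom _),
    map_kleeneStar _ (RegexQ.eval_kstar _)]
  refine kleeneStar_le _ (of fun i j => {w | w.foldl step i = j} : Matrix _ _ (Language A))
    (fun i => ?_) (fun i j k => ?_) (fun i j w hw => ?_) i j
  · rintro _ rfl; rfl
  · rintro _ ⟨u, rfl, v, rfl, rfl⟩
    exact List.foldl_append
  · obtain ⟨p, rfl, rfl⟩ := (mem_lang_dfaM step).1 hw
    rfl

theorem lang_star_dfaM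
    (S : Matrix (Fin n) (Fin n) (RegexQ A) → Matrix (Fin n) (Fin n) (RegexQ A))
    (hS : IsKleeneAlgebra mAdd mMul S (mId (Fin n)) (mZero (Fin n) (Fin n))) (i j : Fin n) :
    (S (dfaM step) i j).lang = {w | w.foldl step i = j} := by
  refine le_antisymm (fun w hw => lang_kleeneStar_dfaM_le step i j ?_) ?_
  · refine RegexQ.lang_mono (le_kleeneStar_of_star_ind (fun x => ?_) i j) hw
    simpa only [mMul_eq_mul, mAdd_eq_add] using hS.star_ind_left x (dfaM step)
  · rintro w rfl
    refine mem_lang_foldl step ?_ w i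
    simpa only [mMul_eq_mul, mAdd_eq_add, mId_eq_one] using hS.star_unfold (dfaM step)

end DFA

theorem dfa_eval_lang_general {A : Type} [Fintype A] {n : ℕ}
    (step : Fin n → A → Fin n) (start : Fin n) (accept : Fin n → Bool)
    (S : Matrix (Fin n) (Fin n) (RegexQ A) → Matrix (Fin n) (Fin n) (RegexQ A))
    (hS : IsKleeneAlgebra mAdd mMul S (mId (Fin n)) (mZero (Fin n) (Fin n))) :
    RegexQ.lang (mMul (mMul (dfaU start) (S (dfaM step))) (dfaV accept) 0 0)
      = {w : List A | dfaAccepts step start accept w} := by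
  ext w
  simp only [mMul_eq_mul, mul_dfaV_apply, dfaU_mul_apply, RegexQ.mem_lang_sum,
    lang_star_dfaM step S hS, Finset.mem_filter, Finset.mem_univ, true_and]
  exact ⟨fun ⟨_, hj, hw⟩ => (congrArg accept hw).trans hj, fun hw => ⟨_, hw, rfl⟩⟩

/-- The language interpretation of the matricial evaluation of a DFA equals
the language recognised by that DFA: `R(u·M*·v)` is the set of accepted
words (the matrix star being any operation making square matrices of
regular expressions a Kleene algebra). -/
theorem dfa_eval_lang {A : Type} [Fintype A] [DecidableEq A] {n : ℕ}
    (step : Fin n → A → Fin n) (start : Fin n) (accept : Fin n → Bool)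
    (S : Matrix (Fin n) (Fin n) (RegexQ A) → Matrix (Fin n) (Fin n) (RegexQ A))
    (hS : IsKleeneAlgebra mAdd mMul S (mId (Fin n)) (mZero (Fin n) (Fin n))) :
    RegexQ.lang (mMul (mMul (dfaU start) (S (dfaM step))) (dfaV accept) 0 0)
      = {w : List A | dfaAccepts step start accept w} :=
  dfa_eval_lang_general step start accept S hS
end

section
/- If R is a bisimulation between finite sets of KAT expressions and X R Y, then the guarded-string languages of X and Y coincide: G(X) = G(Y), where G(X) = ⋃_{x∈X} G(x). -/
/-- Boolean expressions over primitive tests `T`. -/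
inductive BExp (T : Type) : Type
  | var : T → BExp T
  | and : BExp T → BExp T → BExp T
  | or : BExp T → BExp T → BExp T
  | not : BExp T → BExp T
  | top : BExp T
  | bot : BExp T

/-- An atom assigns a Boolean value to each primitive test. -/
def Atom (T : Type) := T → Bool

/-- Satisfaction of a Boolean expression by an atom. -/
def BExp.sat {T : Type} (α : Atom T) : BExp T → Bool
  | .var t => α t
  | .and a b => a.sat α && b.sat α
  | .or a b => a.sat α || b.sat α
  | .not a => !a.sat α
  | .top => true
  | .bot => false

/-- KAT expressions over letters `A` and primitive tests `T`. -/
inductive KATExp (T A : Type) : Type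
  | letter : A → KATExp T A
  | test : BExp T → KATExp T A
  | zero : KATExp T A
  | one : KATExp T A
  | plus : KATExp T A → KATExp T A → KATExp T A
  | mul : KATExp T A → KATExp T A → KATExp T A
  | star : KATExp T A → KATExp T A

/-- Guarded strings: an atom followed by a list of (letter, atom) pairs. -/
def GS (T A : Type) := Atom T × List (A × Atom T)

def GS.lastAtom {T A : Type} (u : GS T A) : Atom T :=
  (u.2.map Prod.snd).getLastD u.1

/-- Partial concatenation of guarded strings. -/
def GS.cat {T A : Type} [DecidableEq (Atom T)] (u v : GS T A) :
    Option (GS T A) :=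
  if u.lastAtom = v.1 then some (u.1, u.2 ++ v.2) else none

def gsCat {T A : Type} [DecidableEq (Atom T)] (x y : Set (GS T A)) :
    Set (GS T A) :=
  {w | ∃ u ∈ x, ∃ v ∈ y, u.cat v = some w}

def gsPow {T A : Type} [DecidableEq (Atom T)] (x : Set (GS T A)) :
    ℕ → Set (GS T A)
  | 0 => {u | u.2 = []}
  | n + 1 => gsCat x (gsPow x n)

/-- The guarded-string language interpretation of KAT expressions. -/
def gsLang {T A : Type} [DecidableEq (Atom T)] : KATExp T A → Set (GS T A)
  | .letter p => {u | ∃ α β, u = (α, [(p, β)])}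
  | .test a => {u | u.2 = [] ∧ a.sat u.1 = true}
  | .zero => ∅
  | .one => {u | u.2 = []}
  | .plus x y => gsLang x ∪ gsLang y
  | .mul x y => gsCat (gsLang x) (gsLang y)
  | .star x => ⋃ n : ℕ, gsPow (gsLang x) n

/-- `ε_α(x)`: does `x` accept the single atom `α`? -/
def eps {T A : Type} (α : Atom T) : KATExp T A → Bool
  | .letter _ => false
  | .test a => a.sat α
  | .zero => false
  | .one => true
  | .plus x y => eps α x || eps α y
  | .mul x y => eps α x && eps α y
  | .star _ => true

/-- The Brzozowski derivative `δ_{α,p}` of a KAT expression. -/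
def katDeriv {T A : Type} [DecidableEq A] (α : Atom T) (p : A) :
    KATExp T A → KATExp T A
  | .letter q => if p = q then .one else .zero
  | .test _ => .zero
  | .zero => .zero
  | .one => .zero
  | .plus x y => .plus (katDeriv α p x) (katDeriv α p y)
  | .mul x y =>
      if eps α x then .plus (.mul (katDeriv α p x) y) (katDeriv α p y)
      else .mul (katDeriv α p x) y
  | .star x => .mul (katDeriv α p x) (.star x)

/-- The Antimirov partial derivative `δ'_{α,p}`, returning a finite set
(list) of expressions. -/
def katPDeriv {T A : Type} [DecidableEq A] (α : Atom T) (p : A) :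
    KATExp T A → List (KATExp T A)
  | .letter q => if p = q then [.one] else []
  | .test _ => []
  | .zero => []
  | .one => []
  | .plus x y => katPDeriv α p x ++ katPDeriv α p y
  | .mul x y =>
      if eps α x then (katPDeriv α p x).map (KATExp.mul · y) ++ katPDeriv α p y
      else (katPDeriv α p x).map (KATExp.mul · y)
  | .star x => (katPDeriv α p x).map (KATExp.mul · (.star x))

/-- `ε_α` of a finite set of expressions. -/
def epsL {T A : Type} (α : Atom T) (X : List (KATExp T A)) : Bool :=
  X.any (eps α)

/-- Partial derivative of a finite set of expressions. -/
def katPDerivL {T A : Type} [DecidableEq A] (α : Atom T) (p : A)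
    (X : List (KATExp T A)) : List (KATExp T A) :=
  (X.map (katPDeriv α p)).flatten

/-- Guarded-string language of a finite set of expressions. -/
def gsLangL {T A : Type} [DecidableEq (Atom T)] (X : List (KATExp T A)) :
    Set (GS T A) :=
  {u | ∃ x ∈ X, u ∈ gsLang x}

/-!
Membership in the guarded-string language is decided coalgebraically: `α ∈ G(x)` iff
`ε_α(x)`, and `α p β w ∈ G(x)` iff `β w ∈ G(y)` for some Antimirov derivative
`y ∈ δ'_{α,p}(x)`. The concatenation case is the only delicate one: a word of `G(x·y)`
starting with a letter either has its first letter in the `x` part (giving `δ'(x)·y`) or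
`x` accepts the bare atom `α` (giving `δ'(y)`, present exactly when `ε_α(x)`); star is the
same with `y = x*`. Both facts lift to finite sets, so the languages of bisimilar sets
agree on every guarded string, by induction on its length.
-/

namespace GS

variable {T A : Type}

/-- A bare `(α, l) : GS T A` elaborates at type `Atom T × _`, which `Set (GS T A)` lemmas
cannot match; `mk` keeps the type `GS T A`. -/
abbrev mk (α : Atom T) (l : List (A × Atom T)) : GS T A := (α, l)

@[simp]
theorem mk_eq_iff {α β : Atom T} {l m : List (A × Atom T)} :
    mk α l = (β, m) ↔ α = β ∧ l = m :=
  Prod.mk_inj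

@[simp]
theorem lastAtom_mk_nil (α : Atom T) : (mk α [] : GS T A).lastAtom = α := rfl

@[simp]
theorem lastAtom_mk_cons (α β : Atom T) (p : A) (l : List (A × Atom T)) :
    (mk α ((p, β) :: l)).lastAtom = (mk β l).lastAtom :=
  List.getLastD_cons ..

end GS

open GS (mk)

def IsBisimulation {T A σ : Type} (o : Atom T → σ → Bool) (δ : Atom T → A → σ → σ)
    (R : σ → σ → Prop) : Prop :=
  ∀ s t, R s t → (∀ α, o α s = o α t) ∧ ∀ α p, R (δ α p s) (δ α p t)

theorem IsBisimulation.lang_eq {T A σ : Type} {o : Atom T → σ → Bool}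
    {δ : Atom T → A → σ → σ} {R : σ → σ → Prop} (hR : IsBisimulation o δ R)
    (L : σ → Set (GS T A)) (mem_nil : ∀ s α, mk α [] ∈ L s ↔ o α s = true)
    (mem_cons : ∀ s α β p l, mk α ((p, β) :: l) ∈ L s ↔ mk β l ∈ L (δ α p s))
    {s t : σ} (hst : R s t) : L s = L t := by
  ext ⟨α, l⟩
  induction l generalizing α s t with
  | nil =>
    change mk α [] ∈ L s ↔ mk α [] ∈ L t
    rw [mem_nil, mem_nil, (hR s t hst).1 α]
  | cons a l ih =>
    obtain ⟨p, β⟩ := a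
    change mk α ((p, β) :: l) ∈ L s ↔ mk α ((p, β) :: l) ∈ L t
    rw [mem_cons, mem_cons]
    exact ih ((hR s t hst).2 α p) β

section GuardedStrings

variable {T A : Type} [DecidableEq (Atom T)] {S S₁ S₂ : Set (GS T A)}

theorem mem_gsCat {γ : Atom T} {l : List (A × Atom T)} :
    mk γ l ∈ gsCat S₁ S₂ ↔
      ∃ l₁ l₂, l = l₁ ++ l₂ ∧ mk γ l₁ ∈ S₁ ∧ mk (mk γ l₁).lastAtom l₂ ∈ S₂ := by
  constructor
  · rintro ⟨⟨γ', l₁⟩, h₁, ⟨δ, l₂⟩, h₂, hcat⟩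
    unfold GS.cat at hcat
    split_ifs at hcat with hlast
    cases hcat
    exact ⟨l₁, l₂, rfl, h₁, hlast ▸ h₂⟩
  · rintro ⟨l₁, l₂, rfl, h₁, h₂⟩
    exact ⟨_, h₁, _, h₂, if_pos rfl⟩

theorem mem_gsCat_nil {α : Atom T} :
    mk α [] ∈ gsCat S₁ S₂ ↔ mk α [] ∈ S₁ ∧ mk α [] ∈ S₂ := by
  simp [mem_gsCat]

theorem mem_gsCat_cons {α β : Atom T} {p : A} {l : List (A × Atom T)} :
    mk α ((p, β) :: l) ∈ gsCat S₁ S₂ ↔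
      (mk α [] ∈ S₁ ∧ mk α ((p, β) :: l) ∈ S₂) ∨
        ∃ l₁ l₂, l = l₁ ++ l₂ ∧ mk α ((p, β) :: l₁) ∈ S₁ ∧ mk (mk β l₁).lastAtom l₂ ∈ S₂ := by
  rw [mem_gsCat]
  constructor
  · rintro ⟨_ | ⟨a, l₁⟩, l₂, h, h₁, h₂⟩
    · cases h
      exact .inl ⟨h₁, h₂⟩
    · obtain ⟨rfl, rfl⟩ := List.cons_eq_cons.mp h
      exact .inr ⟨l₁, l₂, rfl, h₁, by rwa [GS.lastAtom_mk_cons] at h₂⟩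
  · rintro (⟨h₁, h₂⟩ | ⟨l₁, l₂, rfl, h₁, h₂⟩)
    · exact ⟨[], _, rfl, h₁, h₂⟩
    · exact ⟨_, l₂, rfl, h₁, by rwa [GS.lastAtom_mk_cons]⟩

theorem mem_iUnion_gsPow_cons {α β : Atom T} {p : A} {l : List (A × Atom T)} :
    mk α ((p, β) :: l) ∈ ⋃ n, gsPow S n ↔
      ∃ l₁ l₂, l = l₁ ++ l₂ ∧ mk α ((p, β) :: l₁) ∈ S ∧
        mk (mk β l₁).lastAtom l₂ ∈ ⋃ n, gsPow S n := by
  constructor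
  · rintro ⟨_, ⟨n, rfl⟩, h⟩
    induction n with
    | zero => exact absurd h (List.cons_ne_nil _ _)
    | succ n ih =>
      rcases mem_gsCat_cons.mp h with ⟨-, h⟩ | ⟨l₁, l₂, rfl, h₁, h₂⟩
      · exact ih h
      · exact ⟨l₁, l₂, rfl, h₁, Set.mem_iUnion_of_mem n h₂⟩
  · rintro ⟨l₁, l₂, rfl, h₁, h₂⟩
    obtain ⟨n, h₂⟩ := Set.mem_iUnion.mp h₂
    exact Set.mem_iUnion_of_mem (n + 1) (mem_gsCat_cons.mpr (.inr ⟨l₁, l₂, rfl, h₁, h₂⟩))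

end GuardedStrings

theorem mem_katPDeriv_mul {T A : Type} [DecidableEq A] {α : Atom T} {p : A}
    {x y z : KATExp T A} :
    z ∈ katPDeriv α p (x.mul y) ↔
      z ∈ (katPDeriv α p x).map (KATExp.mul · y) ∨ (eps α x = true ∧ z ∈ katPDeriv α p y) := by
  by_cases hx : eps α x <;> simp [katPDeriv, hx]

section KAT

variable {T A : Type} [DecidableEq (Atom T)]

theorem mem_gsLang_nil (x : KATExp T A) (α : Atom T) :
    mk α [] ∈ gsLang x ↔ eps α x = true := by
  induction x with
  | star x => exact ⟨fun _ => rfl, fun _ => Set.mem_iUnion_of_mem 0 rfl⟩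
  | _ => simp_all [gsLang, eps, mem_gsCat_nil]

theorem exists_mem_map_mul_gsLang_iff (D : List (KATExp T A)) (y : KATExp T A) (β : Atom T)
    (l : List (A × Atom T)) :
    (∃ z ∈ D.map (KATExp.mul · y), mk β l ∈ gsLang z) ↔
      ∃ l₁ l₂, l = l₁ ++ l₂ ∧ (∃ z ∈ D, mk β l₁ ∈ gsLang z) ∧
        mk (mk β l₁).lastAtom l₂ ∈ gsLang y := by
  simp only [List.mem_map, exists_exists_and_eq_and, gsLang, mem_gsCat]
  constructor
  · rintro ⟨z, hz, l₁, l₂, rfl, h₁, h₂⟩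
    exact ⟨l₁, l₂, rfl, ⟨z, hz, h₁⟩, h₂⟩
  · rintro ⟨l₁, l₂, rfl, ⟨z, hz, h₁⟩, h₂⟩
    exact ⟨z, hz, l₁, l₂, rfl, h₁, h₂⟩

theorem mem_gsLangL_nil (X : List (KATExp T A)) (α : Atom T) :
    mk α [] ∈ gsLangL X ↔ epsL α X = true := by
  simp [gsLangL, epsL, mem_gsLang_nil]

variable [DecidableEq A]

theorem mem_gsLang_cons (x : KATExp T A) (α β : Atom T) (p : A) (l : List (A × Atom T)) :
    mk α ((p, β) :: l) ∈ gsLang x ↔ ∃ y ∈ katPDeriv α p x, mk β l ∈ gsLang y := by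
  induction x generalizing l with
  | letter q =>
    by_cases hpq : p = q
    · subst hpq
      simp [gsLang, katPDeriv]
    · simp [gsLang, katPDeriv, hpq]
  | test | zero | one => simp [gsLang, katPDeriv]
  | plus x y ihx ihy => simp [gsLang, katPDeriv, ihx, ihy, or_and_right, exists_or]
  | mul x y ihx ihy =>
    simp only [mem_katPDeriv_mul, or_and_right, exists_or, and_assoc,
      exists_mem_map_mul_gsLang_iff]
    rw [gsLang, mem_gsCat_cons, mem_gsLang_nil, ihy, or_comm]
    simp only [ihx, exists_and_left]
  | star x ih =>
    rw [katPDeriv, exists_mem_map_mul_gsLang_iff, gsLang, mem_iUnion_gsPow_cons]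
    simp only [ih]

theorem mem_gsLangL_cons (X : List (KATExp T A)) (α β : Atom T) (p : A)
    (l : List (A × Atom T)) :
    mk α ((p, β) :: l) ∈ gsLangL X ↔ mk β l ∈ gsLangL (katPDerivL α p X) := by
  simp only [gsLangL, katPDerivL, Set.mem_ofPred_eq, mem_gsLang_cons, List.mem_flatten,
    List.mem_map, exists_exists_and_eq_and]
  constructor
  · rintro ⟨x, hx, y, hy, h⟩
    exact ⟨y, ⟨x, hx, hy⟩, h⟩
  · rintro ⟨y, ⟨x, hx, hy⟩, h⟩
    exact ⟨x, hx, y, hy, h⟩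

end KAT

/-- If `R` is a bisimulation between finite sets of KAT expressions and
`X R Y`, then the guarded-string languages of `X` and `Y` coincide. -/
theorem bisim_gsLang {T A : Type} [DecidableEq (Atom T)] [DecidableEq A]
    (R : List (KATExp T A) → List (KATExp T A) → Prop)
    (hbisim : ∀ X Y, R X Y →
      (∀ α : Atom T, epsL α X = epsL α Y)
      ∧ (∀ (α : Atom T) (p : A), R (katPDerivL α p X) (katPDerivL α p Y)))
    (X Y : List (KATExp T A)) (hXY : R X Y) :
    gsLangL X = gsLangL Y :=
  IsBisimulation.lang_eq (o := epsL) hbisim gsLangL mem_gsLangL_nil mem_gsLangL_cons hXY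
end
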